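/- For functions f, g : (0,1] → ℝ with |f(r)| ≤ C₁ r^a (1-r)^{b-1} and |g(r)| ≤ C₂ r^a (1-r)^{d-1} on (0,1), where a ≥ 0 and b, d > 0, the Mellin convolution satisfies |(f*g)(r)| ≤ C r^a (1-r)^{b+d-1} ln(e/r) for some constant C and all r ∈ (0,1). -/

import Mathlib

/-!
Since `(r/t)^a t^a = r^a` and `(1 - r/t)^(b-1) / t = (t-r)^(b-1) t^(-b)`, the integrand of
`mellinConv f g r` is at most `C₁ C₂ r^a` times the kernel `(t-r)^(b-1) (1-t)^(d-1) t^(-b)`, so it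
remains to integrate the kernel over `(r,1]`. As `t = r • 1 + (1-r) • u` with `u = (t-r)/(1-r)`,
both `t ≥ r` and `t ≥ u`. The bound `t ≥ u` gives
`(t-r)^(b-1) t^(-b) ≤ (1-r)^b / (t-r) = O((1-r)^(b-1))` for `t ≥ (1+r)/2`, while
`(1-t)^(d-1) = O((1-r)^(d-1))` for `t ≤ (1+r)/2`. Finally
`∫_r^1 (t-r)^(b-1) t^(-b) dt ≤ (1-r)^b (1/b - log r)`, using `t ≥ r` where `u ≤ r` and `t ≥ u`
where `u ≥ r`; the second range produces the logarithm.
-/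

open MeasureTheory Set

/-- The Mellin convolution of two functions on `(0,1]`:
`(f*g)(r) = ∫_r^1 f(r/t) g(t) dt/t`. -/
noncomputable def mellinConv (f g : ℝ → ℝ) (r : ℝ) : ℝ :=
  ∫ t in Set.Ioc r 1, f (r / t) * g t / t

lemma rpow_le_add_rpow_of_mem_Icc {u x v p : ℝ} (hu : 0 < u) (hux : u ≤ x) (hxv : x ≤ v) :
    x ^ p ≤ u ^ p + v ^ p := by
  rcases le_total p 0 with hp | hp
  · linarith [Real.rpow_le_rpow_of_nonpos hu hux hp,
      Real.rpow_nonneg (hu.le.trans (hux.trans hxv)) p]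
  · linarith [Real.rpow_le_rpow (hu.le.trans hux) hxv hp, Real.rpow_nonneg hu.le p]

lemma rpow_le_of_half_le {x v p : ℝ} (hv : 0 < v) (hvx : v / 2 ≤ x) (hxv : x ≤ v) :
    x ^ p ≤ (1 + 2 ^ (-p)) * v ^ p := by
  have h := rpow_le_add_rpow_of_mem_Icc (p := p) (half_pos hv) hvx hxv
  rw [Real.div_rpow hv.le zero_le_two, div_eq_mul_inv, ← Real.rpow_neg zero_le_two] at h
  linarith

lemma nonneg_of_forall_abs_le {h : ℝ → ℝ} {C a p : ℝ}
    (hh : ∀ x ∈ Ioo (0:ℝ) 1, |h x| ≤ C * x ^ a * (1 - x) ^ p) : 0 ≤ C := by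
  have hw : 0 < (1 / 2 : ℝ) ^ a * (1 - 1 / 2) ^ p := by positivity
  refine nonneg_of_mul_nonneg_left ?_ hw
  rw [← mul_assoc]
  exact (abs_nonneg _).trans (hh (1 / 2) ⟨by norm_num, by norm_num⟩)

section PowerIntegrals

variable {r s e p : ℝ}

lemma integrableOn_Ioc_sub_rpow (hp : -1 < p) :
    IntegrableOn (fun t => (t - r) ^ p) (Ioc r e) := by
  have h := (intervalIntegral.intervalIntegrable_rpow' (a := 0) (b := e - r) hp).comp_sub_right r
  simpa using h.1

lemma integral_Ioc_sub_rpow (hp : -1 < p) (hre : r ≤ e) :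
    ∫ t in Ioc r e, (t - r) ^ p = (e - r) ^ (p + 1) / (p + 1) := by
  rw [← intervalIntegral.integral_of_le hre,
    intervalIntegral.integral_comp_sub_right (fun x => x ^ p) r, integral_rpow (Or.inl hp),
    sub_self, Real.zero_rpow (by linarith)]
  ring

lemma integrableOn_Ioc_one_sub_rpow (hp : -1 < p) :
    IntegrableOn (fun t => (1 - t) ^ p) (Ioc r 1) := by
  have h := (intervalIntegral.intervalIntegrable_rpow' (a := 1 - r) (b := 0) hp).comp_sub_left 1
  simpa using h.1

lemma integral_Ioc_one_sub_rpow (hp : -1 < p) (hr : r ≤ 1) :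
    ∫ t in Ioc r 1, (1 - t) ^ p = (1 - r) ^ (p + 1) / (p + 1) := by
  rw [← intervalIntegral.integral_of_le hr,
    intervalIntegral.integral_comp_sub_left (fun x => x ^ p) 1, integral_rpow (Or.inl hp), sub_self,
    Real.zero_rpow (by linarith)]
  ring

lemma integrableOn_Ioc_sub_inv (hrs : r < s) (hse : s ≤ e) :
    IntegrableOn (fun t => (t - r)⁻¹) (Ioc s e) := by
  refine (intervalIntegral.intervalIntegrable_inv (fun t ht => ?_) (by fun_prop)).1
  rw [uIcc_of_le hse] at ht
  exact sub_ne_zero.2 (hrs.trans_le ht.1).ne'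

lemma integral_Ioc_sub_inv (hrs : r < s) (hse : s ≤ e) :
    ∫ t in Ioc s e, (t - r)⁻¹ = Real.log ((e - r) / (s - r)) := by
  rw [← intervalIntegral.integral_of_le hse,
    intervalIntegral.integral_comp_sub_right (fun x => x⁻¹) r,
    integral_inv_of_pos (by linarith) (by linarith)]

end PowerIntegrals

noncomputable def mellinKernel (b d r t : ℝ) : ℝ :=
  (t - r) ^ (b - 1) * (1 - t) ^ (d - 1) * t ^ (-b)

section Kernel

variable {b d r t : ℝ}

lemma sub_rpow_mul_rpow_neg_le_of_le (hb : 0 ≤ b) (hr : 0 < r) (hrt : r ≤ t) :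
    (t - r) ^ (b - 1) * t ^ (-b) ≤ r ^ (-b) * (t - r) ^ (b - 1) := by
  rw [mul_comm]
  exact mul_le_mul_of_nonneg_right (Real.rpow_le_rpow_of_nonpos hr hrt (neg_nonpos.2 hb))
    (Real.rpow_nonneg (sub_nonneg.2 hrt) _)

lemma sub_rpow_mul_rpow_neg_le_inv (hb : 0 ≤ b) (hr0 : 0 ≤ r) (hr1 : r < 1) (hrt : r < t)
    (ht1 : t ≤ 1) : (t - r) ^ (b - 1) * t ^ (-b) ≤ (1 - r) ^ b * (t - r)⁻¹ := by
  have htr : 0 < t - r := sub_pos.2 hrt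
  have h1r : 0 < 1 - r := sub_pos.2 hr1
  have hut : (t - r) / (1 - r) ≤ t := by
    rw [div_le_iff₀ h1r]
    nlinarith
  calc (t - r) ^ (b - 1) * t ^ (-b) ≤ (t - r) ^ (b - 1) * ((t - r) / (1 - r)) ^ (-b) :=
        mul_le_mul_of_nonneg_left (Real.rpow_le_rpow_of_nonpos (div_pos htr h1r) hut
          (neg_nonpos.2 hb)) (Real.rpow_nonneg htr.le _)
    _ = (1 - r) ^ b * ((t - r) ^ (b - 1) * (t - r) ^ (-b)) := by
        rw [Real.div_rpow htr.le h1r.le, Real.rpow_neg h1r.le, div_inv_eq_mul]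
        ring
    _ = (1 - r) ^ b * (t - r)⁻¹ := by
        rw [← Real.rpow_add htr, show b - 1 + -b = -1 by ring, Real.rpow_neg_one]

lemma integrableOn_sub_rpow_mul_rpow_neg (hb : 0 < b) (hr : 0 < r) (e : ℝ) :
    IntegrableOn (fun t => (t - r) ^ (b - 1) * t ^ (-b)) (Ioc r e) := by
  refine Integrable.mono'
    ((integrableOn_Ioc_sub_rpow (p := b - 1) (by linarith)).const_mul (r ^ (-b)))
    (by fun_prop : Measurable _).aestronglyMeasurable
    (ae_restrict_of_forall_mem measurableSet_Ioc fun t ht => ?_)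
  have htr : 0 ≤ t - r := sub_nonneg.2 ht.1.le
  rw [Real.norm_of_nonneg (mul_nonneg (Real.rpow_nonneg htr _)
    (Real.rpow_nonneg (hr.trans ht.1).le _))]
  exact sub_rpow_mul_rpow_neg_le_of_le hb.le hr ht.1.le

lemma integral_sub_rpow_mul_rpow_neg_le (hb : 0 < b) (hr0 : 0 < r) (hr1 : r < 1) :
    ∫ t in Ioc r 1, (t - r) ^ (b - 1) * t ^ (-b) ≤ (1 - r) ^ b * (1 / b - Real.log r) := by
  have h1r : 0 < 1 - r := sub_pos.2 hr1
  -- the split point is where `(t - r) / (1 - r) = r`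
  set s := r + r * (1 - r)
  have hrs : r < s := by nlinarith
  have hs1 : s ≤ 1 := by nlinarith
  have hsr : s - r = r * (1 - r) := by ring
  have hψ := integrableOn_sub_rpow_mul_rpow_neg hb hr0 1
  have hlow : ∫ t in Ioc r s, (t - r) ^ (b - 1) * t ^ (-b) ≤ (1 - r) ^ b / b :=
    calc ∫ t in Ioc r s, (t - r) ^ (b - 1) * t ^ (-b)
        ≤ ∫ t in Ioc r s, r ^ (-b) * (t - r) ^ (b - 1) :=
          setIntegral_mono_on (hψ.mono_set (Ioc_subset_Ioc_right hs1))
            ((integrableOn_Ioc_sub_rpow (p := b - 1) (by linarith)).const_mul _) measurableSet_Ioc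
            fun t ht => sub_rpow_mul_rpow_neg_le_of_le hb.le hr0 ht.1.le
      _ = r ^ (-b) * r ^ b * (1 - r) ^ b / b := by
          rw [integral_const_mul, integral_Ioc_sub_rpow (by linarith) hrs.le, sub_add_cancel, hsr,
            Real.mul_rpow hr0.le h1r.le]
          ring
      _ = (1 - r) ^ b / b := by rw [← Real.rpow_add hr0, neg_add_cancel, Real.rpow_zero, one_mul]
  have hhigh : ∫ t in Ioc s 1, (t - r) ^ (b - 1) * t ^ (-b) ≤ (1 - r) ^ b * -Real.log r :=
    calc ∫ t in Ioc s 1, (t - r) ^ (b - 1) * t ^ (-b)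
        ≤ ∫ t in Ioc s 1, (1 - r) ^ b * (t - r)⁻¹ :=
          setIntegral_mono_on (hψ.mono_set (Ioc_subset_Ioc_left hrs.le))
            ((integrableOn_Ioc_sub_inv hrs hs1).const_mul _) measurableSet_Ioc
            fun t ht => sub_rpow_mul_rpow_neg_le_inv hb.le hr0.le hr1 (hrs.trans ht.1) ht.2
      _ = (1 - r) ^ b * -Real.log r := by
          rw [integral_const_mul, integral_Ioc_sub_inv hrs hs1, hsr,
            div_mul_cancel_right₀ h1r.ne', Real.log_inv]
  rw [← Ioc_union_Ioc_eq_Ioc hrs.le hs1, setIntegral_union (Ioc_disjoint_Ioc_of_le le_rfl)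
    measurableSet_Ioc (hψ.mono_set (Ioc_subset_Ioc_right hs1))
    (hψ.mono_set (Ioc_subset_Ioc_left hrs.le))]
  calc _ ≤ (1 - r) ^ b / b + (1 - r) ^ b * -Real.log r := add_le_add hlow hhigh
    _ = _ := by ring

lemma mellinKernel_le (hb : 0 ≤ b) (hr0 : 0 ≤ r) (hr1 : r < 1) (ht : t ∈ Ioc r 1) :
    mellinKernel b d r t ≤
      (1 + 2 ^ (-(d - 1))) * (1 - r) ^ (d - 1) * ((t - r) ^ (b - 1) * t ^ (-b)) +
        2 * (1 - r) ^ (b - 1) * (1 - t) ^ (d - 1) := by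
  obtain ⟨hrt, ht1⟩ := ht
  rw [mellinKernel]
  have h1r : 0 < 1 - r := sub_pos.2 hr1
  have hψ : 0 ≤ (t - r) ^ (b - 1) * t ^ (-b) :=
    mul_nonneg (Real.rpow_nonneg (by linarith) _) (Real.rpow_nonneg (by linarith) _)
  have h1t : 0 ≤ (1 - t) ^ (d - 1) := Real.rpow_nonneg (by linarith) _
  rcases le_or_gt t ((1 + r) / 2) with hlow | hhigh
  · have h : (1 - t) ^ (d - 1) ≤ (1 + 2 ^ (-(d - 1))) * (1 - r) ^ (d - 1) :=
      rpow_le_of_half_le h1r (by linarith) (by linarith)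
    refine le_add_of_le_of_nonneg ?_ (by positivity)
    calc _ = (1 - t) ^ (d - 1) * ((t - r) ^ (b - 1) * t ^ (-b)) := by ring
      _ ≤ _ := mul_le_mul_of_nonneg_right h hψ
  · have h : (t - r) ^ (b - 1) * t ^ (-b) ≤ 2 * (1 - r) ^ (b - 1) :=
      calc _ ≤ (1 - r) ^ b * (t - r)⁻¹ := sub_rpow_mul_rpow_neg_le_inv hb hr0 hr1 hrt ht1
        _ ≤ (1 - r) ^ b * (2 / (1 - r)) := by
            gcongr
            rw [inv_le_comm₀ (by linarith) (by positivity), inv_div]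
            linarith
        _ = 2 * (1 - r) ^ (b - 1) := by rw [Real.rpow_sub_one h1r.ne']; ring
    refine le_add_of_nonneg_of_le (by positivity) ?_
    calc _ = ((t - r) ^ (b - 1) * t ^ (-b)) * (1 - t) ^ (d - 1) := by ring
      _ ≤ _ := mul_le_mul_of_nonneg_right h h1t

lemma integrableOn_mellinKernel (hb : 0 < b) (hd : 0 < d) (hr0 : 0 < r) (hr1 : r < 1) :
    IntegrableOn (mellinKernel b d r) (Ioc r 1) := by
  refine Integrable.mono'
    (((integrableOn_sub_rpow_mul_rpow_neg hb hr0 1).const_mul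
        ((1 + 2 ^ (-(d - 1))) * (1 - r) ^ (d - 1))).add
      ((integrableOn_Ioc_one_sub_rpow (p := d - 1) (by linarith)).const_mul
        (2 * (1 - r) ^ (b - 1))))
    (by unfold mellinKernel; fun_prop : Measurable _).aestronglyMeasurable
    (ae_restrict_of_forall_mem measurableSet_Ioc fun t ht => ?_)
  have h1t : 0 ≤ 1 - t := sub_nonneg.2 ht.2
  have ht0 : 0 ≤ t := hr0.le.trans ht.1.le
  have htr : 0 ≤ t - r := sub_nonneg.2 ht.1.le
  rw [Real.norm_of_nonneg (by unfold mellinKernel; positivity)]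
  exact mellinKernel_le hb.le hr0.le hr1 ht

lemma integral_mellinKernel_le (hb : 0 < b) (hd : 0 < d) (hr0 : 0 < r) (hr1 : r < 1) :
    ∫ t in Ioc r 1, mellinKernel b d r t ≤
      ((1 + 2 ^ (-(d - 1))) * (1 / b + 1) + 2 / d) * (1 - r) ^ (b + d - 1) * (1 - Real.log r) := by
  set A : ℝ := 1 + 2 ^ (-(d - 1))
  have h1r : 0 < 1 - r := sub_pos.2 hr1
  have hψ := integrableOn_sub_rpow_mul_rpow_neg hb hr0 1
  have h1t := integrableOn_Ioc_one_sub_rpow (r := r) (p := d - 1) (by linarith)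
  have hkernel : ∫ t in Ioc r 1, mellinKernel b d r t ≤
      A * (1 - r) ^ (d - 1) * (∫ t in Ioc r 1, (t - r) ^ (b - 1) * t ^ (-b)) +
        2 * (1 - r) ^ (b - 1) * ∫ t in Ioc r 1, (1 - t) ^ (d - 1) := by
    rw [← integral_const_mul, ← integral_const_mul,
      ← integral_add (hψ.const_mul _) (h1t.const_mul _)]
    exact setIntegral_mono_on (integrableOn_mellinKernel hb hd hr0 hr1)
      ((hψ.const_mul _).add (h1t.const_mul _)) measurableSet_Ioc
      fun t ht => mellinKernel_le hb.le hr0.le hr1 ht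
  have hA : 0 ≤ A := by positivity
  have hlog : 0 ≤ -Real.log r := neg_nonneg.2 (Real.log_nonpos hr0.le hr1.le)
  have hconst :
      A * (1 / b - Real.log r) + 2 / d ≤ (A * (1 / b + 1) + 2 / d) * (1 - Real.log r) := by
    have hb' : 0 ≤ 1 / b := by positivity
    have hd' : 0 ≤ 2 / d := by positivity
    nlinarith [mul_nonneg (mul_nonneg hA hb') hlog, mul_nonneg hd' hlog]
  calc _ ≤ A * (1 - r) ^ (d - 1) * ((1 - r) ^ b * (1 / b - Real.log r)) +
        2 * (1 - r) ^ (b - 1) * ((1 - r) ^ d / d) := by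
        refine hkernel.trans ?_
        rw [integral_Ioc_one_sub_rpow (by linarith) hr1.le, sub_add_cancel]
        gcongr
        exact integral_sub_rpow_mul_rpow_neg_le hb hr0 hr1
    _ = (1 - r) ^ (b + d - 1) * (A * (1 / b - Real.log r) + 2 / d) := by
        have e1 : (1 - r) ^ (d - 1) * (1 - r) ^ b = (1 - r) ^ (b + d - 1) := by
          rw [← Real.rpow_add h1r]; ring_nf
        have e2 : (1 - r) ^ (b - 1) * (1 - r) ^ d = (1 - r) ^ (b + d - 1) := by
          rw [← Real.rpow_add h1r]; ring_nf
        linear_combination (A * (1 / b - Real.log r)) * e1 + (2 / d) * e2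
    _ ≤ _ := by
        rw [mul_comm _ ((1 - r) ^ (b + d - 1)), mul_assoc]
        exact mul_le_mul_of_nonneg_left hconst (by positivity)

end Kernel

lemma norm_mellinConv_integrand_le {f g : ℝ → ℝ} {a b d C₁ C₂ r t : ℝ}
    (hf : ∀ x ∈ Ioo (0:ℝ) 1, |f x| ≤ C₁ * x ^ a * (1 - x) ^ (b - 1))
    (hg : ∀ x ∈ Ioo (0:ℝ) 1, |g x| ≤ C₂ * x ^ a * (1 - x) ^ (d - 1))
    (hr : 0 < r) (ht : t ∈ Ioo r 1) :
    ‖f (r / t) * g t / t‖ ≤ C₁ * C₂ * r ^ a * mellinKernel b d r t := by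
  obtain ⟨hrt, ht1⟩ := ht
  have ht0 : 0 < t := hr.trans hrt
  have hf' := hf (r / t) ⟨div_pos hr ht0, (div_lt_one ht0).2 hrt⟩
  have hg' := hg t ⟨ht0, ht1⟩
  have hweight : C₁ * (r / t) ^ a * (1 - r / t) ^ (b - 1) * (C₂ * t ^ a * (1 - t) ^ (d - 1)) / t =
      C₁ * C₂ * r ^ a * mellinKernel b d r t := by
    have hta : t ^ a ≠ 0 := (Real.rpow_pos_of_pos ht0 a).ne'
    have htb : t ^ (b - 1) ≠ 0 := (Real.rpow_pos_of_pos ht0 (b - 1)).ne'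
    rw [mellinKernel, Real.div_rpow hr.le ht0.le, one_sub_div ht0.ne',
      Real.div_rpow (by linarith) ht0.le, show -b = -(b - 1 + 1) by ring, Real.rpow_neg ht0.le,
      Real.rpow_add_one ht0.ne']
    field_simp
  rw [Real.norm_eq_abs, abs_div, abs_mul, abs_of_pos ht0, ← hweight]
  exact div_le_div_of_nonneg_right (mul_le_mul hf' hg' (abs_nonneg _) ((abs_nonneg _).trans hf'))
    ht0.le

theorem mellinConv_type_of_eq_general (f g : ℝ → ℝ) (a b d C₁ C₂ : ℝ)
    (hb : 0 < b) (hd : 0 < d)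
    (hf : ∀ r ∈ Set.Ioo (0:ℝ) 1, |f r| ≤ C₁ * r ^ a * (1 - r) ^ (b - 1))
    (hg : ∀ r ∈ Set.Ioo (0:ℝ) 1, |g r| ≤ C₂ * r ^ a * (1 - r) ^ (d - 1)) :
    ∃ C : ℝ, ∀ r ∈ Set.Ioo (0:ℝ) 1,
      |mellinConv f g r| ≤
        C * r ^ a * (1 - r) ^ (b + d - 1) * Real.log (Real.exp 1 / r) := by
  have hC : 0 ≤ C₁ * C₂ := mul_nonneg (nonneg_of_forall_abs_le hf) (nonneg_of_forall_abs_le hg)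
  refine ⟨C₁ * C₂ * ((1 + 2 ^ (-(d - 1))) * (1 / b + 1) + 2 / d), fun r ⟨hr0, hr1⟩ => ?_⟩
  have hbound : ∀ᵐ t ∂volume.restrict (Ioc r 1), ‖f (r / t) * g t / t‖ ≤
      C₁ * C₂ * r ^ a * mellinKernel b d r t := by
    rw [← Measure.restrict_congr_set Ioo_ae_eq_Ioc]
    exact ae_restrict_of_forall_mem measurableSet_Ioo fun t ht =>
      norm_mellinConv_integrand_le hf hg hr0 ht
  calc |mellinConv f g r|
      ≤ ∫ t in Ioc r 1, C₁ * C₂ * r ^ a * mellinKernel b d r t :=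
        norm_integral_le_of_norm_le ((integrableOn_mellinKernel hb hd hr0 hr1).const_mul _) hbound
    _ = C₁ * C₂ * r ^ a * ∫ t in Ioc r 1, mellinKernel b d r t := integral_const_mul _ _
    _ ≤ C₁ * C₂ * r ^ a * (((1 + 2 ^ (-(d - 1))) * (1 / b + 1) + 2 / d) *
          (1 - r) ^ (b + d - 1) * (1 - Real.log r)) :=
        mul_le_mul_of_nonneg_left (integral_mellinKernel_le hb hd hr0 hr1) (by positivity)
    _ = _ := by
        rw [Real.log_div (Real.exp_ne_zero 1) hr0.ne', Real.log_exp]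
        ring

/-- Lemma A, case `a = c`: the Mellin convolution of a function of type `(a,b)`
with a function of type `(a,d)` is bounded by `C r^a (1-r)^{b+d-1} ln(e/r)`. -/
theorem mellinConv_type_of_eq (f g : ℝ → ℝ) (a b d C₁ C₂ : ℝ)
    (ha : 0 ≤ a) (hb : 0 < b) (hd : 0 < d)
    (hf : ∀ r ∈ Set.Ioo (0:ℝ) 1, |f r| ≤ C₁ * r ^ a * (1 - r) ^ (b - 1))
    (hg : ∀ r ∈ Set.Ioo (0:ℝ) 1, |g r| ≤ C₂ * r ^ a * (1 - r) ^ (d - 1)) :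
    ∃ C : ℝ, ∀ r ∈ Set.Ioo (0:ℝ) 1,
      |mellinConv f g r| ≤
        C * r ^ a * (1 - r) ^ (b + d - 1) * Real.log (Real.exp 1 / r) :=
  mellinConv_type_of_eq_general f g a b d C₁ C₂ hb hd hf hg
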